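/- Let v₁, v₂, v₃ be linearly independent unit vectors in ℝ³ and let C be the closed convex cone of their nonnegative linear combinations. For almost every unit vector u (with respect to the spherical surface measure), exactly one of the following holds: the orthogonal projection of C onto u^⊥ equals all of u^⊥, or there exist linearly independent vectors w₁, w₂ ∈ u^⊥ such that the projection of C onto u^⊥ equals {s w₁ + t w₂ : s, t ≥ 0}. In other words, almost surely the projected figure is either the whole plane (0 vertices, 0 edges) or a planar convex cone with exactly one vertex and two edges, so the number of edges is almost surely twice the number of vertices. -/

import Mathlib

/-! Outside the three planes spanned by pairs of the `vᵢ` (a null set: each meets the sphere in a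
great circle, of Hausdorff dimension one), the projections `P vᵢ` onto `u^⊥` are pairwise
independent vectors of a plane. Write `P v₃ = α • P v₁ + β • P v₂` with `α, β ≠ 0`. If `α, β < 0`,
the three vectors positively span the plane; otherwise one of them is a nonnegative combination
of the other two, which then generate the projected cone. A cone generated by two independent
vectors never contains the negative of their sum, so the two alternatives exclude each other. -/

open MeasureTheory Set Submodule Module
open scoped NNReal

theorem LinearIndependent.pairs_of_triple {R M : Type*} [Semiring R] [AddCommGroup M] [Module R M]
    {x y z : M} (h : LinearIndependent R ![x, y, z]) :
    LinearIndependent R ![x, y] ∧ LinearIndependent R ![x, z] ∧ LinearIndependent R ![y, z] := by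
  refine ⟨?_, ?_, ?_⟩
  · convert h.comp ![0, 1] (by decide) using 1; ext i; fin_cases i <;> rfl
  · convert h.comp ![0, 2] (by decide) using 1; ext i; fin_cases i <;> rfl
  · convert h.comp ![1, 2] (by decide) using 1; ext i; fin_cases i <;> rfl

section PlanarCone

variable {V : Type*} [AddCommGroup V] [Module ℝ V]

def cone2 (w₁ w₂ : V) : Set V := {x | ∃ s t : ℝ, 0 ≤ s ∧ 0 ≤ t ∧ x = s • w₁ + t • w₂}

def cone3 (e₁ e₂ e₃ : V) : Set V :=
  {x | ∃ t₁ t₂ t₃ : ℝ, 0 ≤ t₁ ∧ 0 ≤ t₂ ∧ 0 ≤ t₃ ∧ x = t₁ • e₁ + t₂ • e₂ + t₃ • e₃}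

theorem cone3_rotate (e₁ e₂ e₃ : V) : cone3 e₁ e₂ e₃ = cone3 e₂ e₃ e₁ := by
  ext x
  constructor
  · rintro ⟨t₁, t₂, t₃, h₁, h₂, h₃, rfl⟩
    exact ⟨t₂, t₃, t₁, h₂, h₃, h₁, by module⟩
  · rintro ⟨t₁, t₂, t₃, h₁, h₂, h₃, rfl⟩
    exact ⟨t₃, t₁, t₂, h₃, h₁, h₂, by module⟩

theorem cone3_swap (e₁ e₂ e₃ : V) : cone3 e₁ e₂ e₃ = cone3 e₁ e₃ e₂ := by
  ext x
  constructor <;> rintro ⟨t₁, t₂, t₃, h₁, h₂, h₃, rfl⟩ <;> exact ⟨t₁, t₃, t₂, h₁, h₃, h₂, by module⟩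

theorem cone3_eq_cone2_of_mem {e₁ e₂ e₃ : V} (h : e₃ ∈ cone2 e₁ e₂) :
    cone3 e₁ e₂ e₃ = cone2 e₁ e₂ := by
  obtain ⟨a, b, ha, hb, rfl⟩ := h
  ext x
  constructor
  · rintro ⟨t₁, t₂, t₃, h₁, h₂, h₃, rfl⟩
    exact ⟨t₁ + t₃ * a, t₂ + t₃ * b, by positivity, by positivity, by module⟩
  · rintro ⟨s, t, hs, ht, rfl⟩
    exact ⟨s, t, 0, hs, ht, le_rfl, by module⟩

theorem cone3_eq_univ {e₁ e₂ e₃ : V} (hspan : ⊤ ≤ span ℝ {e₁, e₂}) {α β : ℝ} (hα : α < 0)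
    (hβ : β < 0) (he₃ : α • e₁ + β • e₂ = e₃) : cone3 e₁ e₂ e₃ = univ := by
  refine eq_univ_of_forall fun x => ?_
  obtain ⟨c₁, c₂, rfl⟩ := mem_span_pair.mp (hspan (mem_top (x := x)))
  -- `x - l • e₃` lies in `cone2 e₁ e₂` for large `l`, as `-e₃` lies in its interior
  set l := max 0 (max (c₁ / α) (c₂ / β))
  have hl₁ : l * α ≤ c₁ := (div_le_iff_of_neg hα).mp ((le_max_left _ _).trans (le_max_right _ _))
  have hl₂ : l * β ≤ c₂ := (div_le_iff_of_neg hβ).mp ((le_max_right _ _).trans (le_max_right _ _))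
  refine ⟨c₁ - l * α, c₂ - l * β, l, by linarith, by linarith, le_max_left _ _, ?_⟩
  rw [← he₃]
  module

theorem cone2_ne_univ {w₁ w₂ : V} (h : LinearIndependent ℝ ![w₁, w₂]) : cone2 w₁ w₂ ≠ univ := by
  intro hU
  obtain ⟨s, t, hs, ht, hst⟩ := hU.symm ▸ mem_univ (-(w₁ + w₂))
  have := LinearIndependent.pair_iff.mp h (s + 1) (t + 1)
    (by linear_combination (norm := module) -hst)
  linarith [this.1]

theorem image_cone3 {W F : Type*} [AddCommGroup W] [Module ℝ W] [FunLike F V W]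
    [LinearMapClass F ℝ V W] (f : F) (e₁ e₂ e₃ : V) :
    f '' cone3 e₁ e₂ e₃ = cone3 (f e₁) (f e₂) (f e₃) := by
  ext y
  constructor
  · rintro ⟨x, ⟨t₁, t₂, t₃, h₁, h₂, h₃, rfl⟩, rfl⟩
    exact ⟨t₁, t₂, t₃, h₁, h₂, h₃, by simp⟩
  · rintro ⟨t₁, t₂, t₃, h₁, h₂, h₃, rfl⟩
    exact ⟨_, ⟨t₁, t₂, t₃, h₁, h₂, h₃, rfl⟩, by simp⟩

theorem cone3_eq_univ_xor_eq_cone2 [FiniteDimensional ℝ V] (hV : finrank ℝ V = 2) {e₁ e₂ e₃ : V}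
    (h₁₂ : LinearIndependent ℝ ![e₁, e₂]) (h₁₃ : LinearIndependent ℝ ![e₁, e₃])
    (h₂₃ : LinearIndependent ℝ ![e₂, e₃]) :
    Xor (cone3 e₁ e₂ e₃ = univ)
      (∃ w₁ w₂ : V, LinearIndependent ℝ ![w₁, w₂] ∧ cone3 e₁ e₂ e₃ = cone2 w₁ w₂) := by
  refine (xor_iff_or_and_not_and _ _).mpr
    ⟨?_, fun ⟨hU, w₁, w₂, hw, hC⟩ => cone2_ne_univ hw (hC ▸ hU)⟩
  have hspan : ⊤ ≤ span ℝ {e₁, e₂} := by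
    rw [← Matrix.range_cons_cons_empty, h₁₂.span_eq_top_of_card_eq_finrank (by simp [hV])]
  obtain ⟨α, β, he₃⟩ := mem_span_pair.mp (hspan (mem_top (x := e₃)))
  have hα : α ≠ 0 := by
    rintro rfl
    exact (LinearIndependent.pair_iff' (h₂₃.ne_zero 0)).mp h₂₃ β (by simpa using he₃)
  have hβ : β ≠ 0 := by
    rintro rfl
    exact (LinearIndependent.pair_iff' (h₁₃.ne_zero 0)).mp h₁₃ α (by simpa using he₃)
  rcases hα.lt_or_gt with hα | hα <;> rcases hβ.lt_or_gt with hβ | hβ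
  · exact Or.inl (cone3_eq_univ hspan hα hβ he₃)
  · refine Or.inr ⟨e₁, e₃, h₁₃, (cone3_swap _ _ _).trans (cone3_eq_cone2_of_mem
      ⟨-α / β, β⁻¹, div_nonneg (by linarith) hβ.le, by positivity, ?_⟩)⟩
    rw [← he₃]
    match_scalars <;> field_simp
    ring
  · refine Or.inr ⟨e₂, e₃, h₂₃, (cone3_rotate _ _ _).trans (cone3_eq_cone2_of_mem
      ⟨-β / α, α⁻¹, div_nonneg (by linarith) hα.le, by positivity, ?_⟩)⟩
    rw [← he₃]
    match_scalars <;> field_simp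
    ring
  · exact Or.inr ⟨e₁, e₂, h₁₂, cone3_eq_cone2_of_mem ⟨α, β, hα.le, hβ.le, he₃.symm⟩⟩

end PlanarCone

section Projection

variable {E : Type*} [NormedAddCommGroup E] [InnerProductSpace ℝ E]

theorem linearIndependent_pair_orthogonalProjectionOnto {u x y : E} (hu : u ≠ 0)
    (hxy : LinearIndependent ℝ ![x, y]) (hu_mem : u ∉ span ℝ {x, y}) :
    LinearIndependent ℝ ![(ℝ ∙ u)ᗮ.orthogonalProjectionOnto x,
      (ℝ ∙ u)ᗮ.orthogonalProjectionOnto y] := by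
  have hker : LinearMap.ker ((ℝ ∙ u)ᗮ.orthogonalProjectionOnto : E →ₗ[ℝ] (ℝ ∙ u)ᗮ) = ℝ ∙ u :=
    ker_orthogonalProjectionOnto.trans (orthogonal_orthogonal _)
  have := hxy.map (f := ((ℝ ∙ u)ᗮ.orthogonalProjectionOnto : E →ₗ[ℝ] (ℝ ∙ u)ᗮ))
    (by rwa [hker, Matrix.range_cons_cons_empty, disjoint_span_singleton' hu])
  rwa [← FinVec.map_eq] at this

theorem Submodule.hausdorffMeasure_inter_sphere_eq_zero [MeasurableSpace E] [BorelSpace E]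
    (W : Submodule ℝ E) (hW : finrank ℝ W = 2) {d : ℝ≥0} (hd : 1 < d) :
    μH[d] ((W : Set E) ∩ Metric.sphere 0 1) = 0 := by
  have : FiniteDimensional ℝ W := Module.finite_of_finrank_eq_succ hW
  let e := Complex.isometryOfOrthonormal ((stdOrthonormalBasis ℝ W).reindex (finCongr hW))
  let L : ℂ →L[ℝ] E := W.subtypeL ∘L e.toContinuousLinearEquiv.toContinuousLinearMap
  let γ : ℝ → E := fun θ => L (Complex.exp (θ * Complex.I))
  have hsub : (W : Set E) ∩ Metric.sphere 0 1 ⊆ range γ := by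
    rintro x ⟨hxW, hx⟩
    have : e.symm ⟨x, hxW⟩ ∈ Metric.sphere (0 : ℂ) 1 := by simpa using hx
    rw [← Complex.range_exp_mul_I] at this
    obtain ⟨θ, hθ⟩ := this
    exact ⟨θ, by simp [γ, L, hθ]⟩
  have hγ : ContDiff ℝ 1 γ := by
    have : ContDiff ℝ 1 ((↑) : ℝ → ℂ) := Complex.ofRealCLM.contDiff
    fun_prop
  apply measure_mono_null hsub
  apply hausdorffMeasure_of_dimH_lt
  calc dimH (range γ) ≤ finrank ℝ ℝ := hγ.dimH_range_le
    _ < d := by simpa using hd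

theorem Submodule.ae_restrict_sphere_notMem [MeasurableSpace E] [BorelSpace E]
    (W : Submodule ℝ E) (hW : finrank ℝ W = 2) :
    ∀ᵐ u ∂(μH[2].restrict (Metric.sphere (0 : E) 1)), u ∉ W := by
  rw [ae_iff, Measure.restrict_apply' Metric.isClosed_sphere.measurableSet]
  simpa using W.hausdorffMeasure_inter_sphere_eq_zero hW (d := 2) one_lt_two

theorem orthogonalProjectionOnto_cone3_xor (hE : finrank ℝ E = 3) {v₁ v₂ v₃ u : E}
    (hli : LinearIndependent ℝ ![v₁, v₂, v₃]) (hu : u ≠ 0) (hu₁ : u ∉ span ℝ {v₂, v₃})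
    (hu₂ : u ∉ span ℝ {v₁, v₃}) (hu₃ : u ∉ span ℝ {v₁, v₂}) :
    Xor ((ℝ ∙ u)ᗮ.orthogonalProjectionOnto '' cone3 v₁ v₂ v₃ = univ)
      (∃ w₁ w₂ : (ℝ ∙ u)ᗮ, LinearIndependent ℝ ![w₁, w₂] ∧
        (ℝ ∙ u)ᗮ.orthogonalProjectionOnto '' cone3 v₁ v₂ v₃ = cone2 w₁ w₂) := by
  obtain ⟨h₁₂, h₁₃, h₂₃⟩ := hli.pairs_of_triple
  have : Fact (finrank ℝ E = 2 + 1) := ⟨hE⟩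
  have : FiniteDimensional ℝ E := Module.finite_of_finrank_eq_succ hE
  rw [image_cone3]
  exact cone3_eq_univ_xor_eq_cone2 (finrank_orthogonal_span_singleton hu)
    (linearIndependent_pair_orthogonalProjectionOnto hu h₁₂ hu₃)
    (linearIndependent_pair_orthogonalProjectionOnto hu h₁₃ hu₂)
    (linearIndependent_pair_orthogonalProjectionOnto hu h₂₃ hu₁)

end Projection

theorem projection_ae_plane_or_planar_cone_general
    (v₁ v₂ v₃ : EuclideanSpace ℝ (Fin 3))
    (hli : LinearIndependent ℝ ![v₁, v₂, v₃])
    (C : Set (EuclideanSpace ℝ (Fin 3)))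
    (hC : C = {x | ∃ t₁ t₂ t₃ : ℝ, 0 ≤ t₁ ∧ 0 ≤ t₂ ∧ 0 ≤ t₃ ∧
        x = t₁ • v₁ + t₂ • v₂ + t₃ • v₃}) :
    ∀ᵐ u ∂(μH[2].restrict (Metric.sphere (0 : EuclideanSpace ℝ (Fin 3)) 1)),
      Xor' (Submodule.orthogonalProjection (ℝ ∙ u)ᗮ '' C = Set.univ)
        (∃ w₁ w₂ : (ℝ ∙ u)ᗮ, LinearIndependent ℝ ![w₁, w₂] ∧
          Submodule.orthogonalProjection (ℝ ∙ u)ᗮ '' C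
            = {x | ∃ s t : ℝ, 0 ≤ s ∧ 0 ≤ t ∧ x = s • w₁ + t • w₂}) := by
  obtain ⟨h₁₂, h₁₃, h₂₃⟩ := hli.pairs_of_triple
  have plane_null {x y : EuclideanSpace ℝ (Fin 3)} (h : LinearIndependent ℝ ![x, y]) :=
    Submodule.ae_restrict_sphere_notMem (span ℝ {x, y})
      (by rw [← Matrix.range_cons_cons_empty, finrank_span_eq_card h, Fintype.card_fin])
  filter_upwards [plane_null h₂₃, plane_null h₁₃, plane_null h₁₂,
    ae_restrict_mem Metric.isClosed_sphere.measurableSet] with u hu₁ hu₂ hu₃ hu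
  subst hC
  exact orthogonalProjectionOnto_cone3_xor finrank_euclideanSpace_fin hli
    (ne_zero_of_mem_sphere one_ne_zero ⟨u, hu⟩) hu₁ hu₂ hu₃

/-- For almost every unit direction `u` (w.r.t. the spherical surface measure), exactly
one of the following holds: the projection of the cone `C` onto `u^⊥` is all of `u^⊥`
(0 vertices, 0 edges), or it is a planar convex cone generated by two linearly
independent vectors of `u^⊥` (1 vertex, 2 edges). Hence the number of edges of the
projection is almost surely twice the number of vertices. -/
theorem projection_ae_plane_or_planar_cone
    (v₁ v₂ v₃ : EuclideanSpace ℝ (Fin 3))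
    (hv₁ : ‖v₁‖ = 1) (hv₂ : ‖v₂‖ = 1) (hv₃ : ‖v₃‖ = 1)
    (hli : LinearIndependent ℝ ![v₁, v₂, v₃])
    (C : Set (EuclideanSpace ℝ (Fin 3)))
    (hC : C = {x | ∃ t₁ t₂ t₃ : ℝ, 0 ≤ t₁ ∧ 0 ≤ t₂ ∧ 0 ≤ t₃ ∧
        x = t₁ • v₁ + t₂ • v₂ + t₃ • v₃}) :
    ∀ᵐ u ∂(μH[2].restrict (Metric.sphere (0 : EuclideanSpace ℝ (Fin 3)) 1)),
      Xor' (Submodule.orthogonalProjection (ℝ ∙ u)ᗮ '' C = Set.univ)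
        (∃ w₁ w₂ : (ℝ ∙ u)ᗮ, LinearIndependent ℝ ![w₁, w₂] ∧
          Submodule.orthogonalProjection (ℝ ∙ u)ᗮ '' C
            = {x | ∃ s t : ℝ, 0 ≤ s ∧ 0 ≤ t ∧ x = s • w₁ + t • w₂}) :=
  projection_ae_plane_or_planar_cone_general v₁ v₂ v₃ hli C hC
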